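/- arXiv:1104.2317 — 3 statements merged into one kernel-verified Lean document; each statement's English description precedes it below -/
import Mathlib

section
/- Let $\rho$ be a compactly supported bounded probability density on $\mathbb{R}$ which is not almost everywhere zero. Then there is a constant $C_2 < \infty$ such that for all $\eta, \beta \in \mathbb{C}$, the decoupling bound $\int \frac{\rho(v)}{|v-\beta|^s}\,dv \le C_2 \int \frac{|v-\eta|^s}{|v-\beta|^s}\rho(v)\,dv$ holds, where $s \in (0,1)$ is fixed. -/
/-!
Let `ρ` vanish outside `[-R, R]` and put `D = ‖β‖ + R`. On the support of `ρ` we have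
`|v - β| ≤ D`, so the right-hand integral is at least `D ^ (-s) * ∫ |v - η| ^ s ρ`, and this
moment is bounded below uniformly in `η`: as `ρ ≤ M`, at most half of the mass lies within
distance `1 / (4M)` of `Re η`. The left-hand integral is bounded, because near `Re β` its
integrand is dominated by `M |v - Re β| ^ (-s)`, integrable for `s < 1`; the subadditivity
`D ^ s ≤ |v - β| ^ s + (2R) ^ s` upgrades this bound to `O(D ^ (-s))`.
-/

open MeasureTheory Set Filter
open scoped Interval

section Kernel

variable {s : ℝ}

theorem intervalIntegrable_abs_sub_rpow_neg (hs : s < 1) (b : ℝ) :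
    IntervalIntegrable (fun v => |v - b| ^ (-s)) volume (b - 1) (b + 1) := by
  have h01 := intervalIntegral.intervalIntegrable_rpow' (a := 0) (b := 1) (by linarith : -1 < -s)
  refine IntervalIntegrable.trans (b := b) ?_ ?_
  · have hl := (h01.comp_sub_left b).symm
    rw [sub_zero] at hl
    refine (intervalIntegrable_congr fun v hv => ?_).1 hl
    rw [uIoc_of_le (by linarith)] at hv
    rw [abs_of_nonpos (by linarith [hv.2]), neg_sub]
  · have hr := h01.comp_sub_right b
    rw [zero_add, add_comm] at hr
    refine (intervalIntegrable_congr fun v hv => ?_).1 hr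
    rw [uIoc_of_le (by linarith)] at hv
    rw [abs_of_nonneg (by linarith [hv.1])]

theorem integral_abs_sub_rpow_neg (hs : s < 1) (b : ℝ) :
    ∫ v in (b - 1)..(b + 1), |v - b| ^ (-s) = 2 / (1 - s) := by
  have hI := intervalIntegrable_abs_sub_rpow_neg hs b
  have hb : b ∈ [[b - 1, b + 1]] := by rw [uIcc_of_le (by linarith)]; constructor <;> linarith
  have h01 : ∫ x in (0 : ℝ)..1, x ^ (-s) = 1 / (1 - s) := by
    rw [integral_rpow (Or.inl (by linarith)), Real.one_rpow, Real.zero_rpow (by linarith)]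
    ring_nf
  have hl : ∫ v in (b - 1)..b, |v - b| ^ (-s) = 1 / (1 - s) := by
    rw [intervalIntegral.integral_congr (g := fun v => (b - v) ^ (-s)) fun v hv => ?_]
    · rw [intervalIntegral.integral_comp_sub_left (fun x => x ^ (-s)), sub_self, sub_sub_cancel,
        h01]
    rw [uIcc_of_le (by linarith)] at hv
    rw [abs_of_nonpos (by linarith [hv.2]), neg_sub]
  have hr : ∫ v in b..(b + 1), |v - b| ^ (-s) = 1 / (1 - s) := by
    rw [intervalIntegral.integral_congr (g := fun v => (v - b) ^ (-s)) fun v hv => ?_]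
    · rw [intervalIntegral.integral_comp_sub_right (fun x => x ^ (-s)), sub_self,
        add_sub_cancel_left, h01]
    rw [uIcc_of_le (by linarith)] at hv
    rw [abs_of_nonneg (by linarith [hv.1])]
  rw [← intervalIntegral.integral_add_adjacent_intervals (hI.mono_set (uIcc_subset_uIcc_left hb))
    (hI.mono_set (uIcc_subset_uIcc_right hb)), hl, hr]
  ring

end Kernel

theorem HasCompactSupport.exists_abs_le_of_ne_zero {f : ℝ → ℝ} (hf : HasCompactSupport f) :
    ∃ R, 0 ≤ R ∧ ∀ v, f v ≠ 0 → |v| ≤ R := by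
  obtain ⟨R, hR⟩ := hf.isBounded.subset_closedBall 0
  refine ⟨max R 0, le_max_right _ _, fun v hv => ?_⟩
  have hvR := hR (subset_tsupport f hv)
  rw [Metric.mem_closedBall, dist_zero_right, Real.norm_eq_abs] at hvR
  exact hvR.trans (le_max_left _ _)

theorem HasCompactSupport.integrable_of_norm_le {X E : Type*} [TopologicalSpace X]
    [MeasurableSpace X] [NormedAddCommGroup E] {μ : Measure X} [IsFiniteMeasureOnCompacts μ]
    {f : X → E} {C : ℝ} (hf : HasCompactSupport f) (hfm : AEStronglyMeasurable f μ)
    (hfC : ∀ x, ‖f x‖ ≤ C) : Integrable f μ :=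
  (integrableOn_iff_integrable_of_support_subset (subset_tsupport f)).1 <|
    Measure.integrableOn_of_bounded hf.isCompact.measure_lt_top.ne hfm (ae_of_all _ hfC)

theorem abs_sub_re_le_norm_sub (v : ℝ) (β : ℂ) : |v - β.re| ≤ ‖(v : ℂ) - β‖ := by
  simpa using Complex.abs_re_le_norm ((v : ℂ) - β)

theorem norm_sub_le_abs_add_norm (v : ℝ) (β : ℂ) : ‖(v : ℂ) - β‖ ≤ |v| + ‖β‖ := by
  simpa [Complex.norm_real] using norm_sub_le (v : ℂ) β

section Density

variable {ρ : ℝ → ℝ} {s M R : ℝ}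

theorem div_norm_sub_rpow_le (hs : 0 ≤ s) (hρ0 : ∀ v, 0 ≤ ρ v) (hρM : ∀ v, ρ v ≤ M) (β : ℂ)
    {v : ℝ} (hv : v ≠ β.re) :
    ρ v / ‖(v : ℂ) - β‖ ^ s
      ≤ M * (Ioc (β.re - 1) (β.re + 1)).indicator (fun v => |v - β.re| ^ (-s)) v + ρ v := by
  have hre := abs_sub_re_le_norm_sub v β
  by_cases hnear : v ∈ Ioc (β.re - 1) (β.re + 1)
  · have hpos : 0 < |v - β.re| := abs_pos.2 (sub_ne_zero.2 hv)
    rw [indicator_of_mem hnear]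
    calc ρ v / ‖(v : ℂ) - β‖ ^ s ≤ M / |v - β.re| ^ s :=
          div_le_div₀ ((hρ0 v).trans (hρM v)) (hρM v) (by positivity)
            (Real.rpow_le_rpow hpos.le hre hs)
      _ = M * |v - β.re| ^ (-s) := by rw [Real.rpow_neg hpos.le, div_eq_mul_inv]
      _ ≤ _ := le_add_of_nonneg_right (hρ0 v)
  · have hfar : 1 ≤ |v - β.re| := by
      rw [mem_Ioc, not_and_or, not_lt, not_le] at hnear
      rcases hnear with h | h
      · rw [abs_of_nonpos (by linarith)]; linarith
      · rw [abs_of_nonneg (by linarith)]; linarith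
    rw [indicator_of_notMem hnear, mul_zero, zero_add]
    exact div_le_self (hρ0 v) (Real.one_le_rpow (hfar.trans hre) hs)

theorem integrable_indicator_abs_sub_rpow_neg (hs : s < 1) (b : ℝ) :
    Integrable ((Ioc (b - 1) (b + 1)).indicator (fun v => |v - b| ^ (-s))) :=
  ((intervalIntegrable_iff_integrableOn_Ioc_of_le (by linarith)).1
    (intervalIntegrable_abs_sub_rpow_neg hs b)).integrable_indicator measurableSet_Ioc

theorem integrable_div_norm_sub_rpow (hs0 : 0 ≤ s) (hs1 : s < 1) (hρ : Integrable ρ)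
    (hρ0 : ∀ v, 0 ≤ ρ v) (hρM : ∀ v, ρ v ≤ M) (β : ℂ) :
    Integrable (fun v => ρ v / ‖(v : ℂ) - β‖ ^ s) := by
  refine (((integrable_indicator_abs_sub_rpow_neg hs1 β.re).const_mul M).add hρ).mono'
    (hρ.aestronglyMeasurable.div₀ (by fun_prop)) ?_
  filter_upwards [volume.ae_ne β.re] with v hv
  rw [Real.norm_eq_abs, abs_of_nonneg (div_nonneg (hρ0 v) (by positivity))]
  exact div_norm_sub_rpow_le hs0 hρ0 hρM β hv

theorem integral_div_norm_sub_rpow_le (hs0 : 0 ≤ s) (hs1 : s < 1) (hρ : Integrable ρ)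
    (hρ0 : ∀ v, 0 ≤ ρ v) (hρM : ∀ v, ρ v ≤ M) (β : ℂ) :
    ∫ v, ρ v / ‖(v : ℂ) - β‖ ^ s ≤ M * (2 / (1 - s)) + ∫ v, ρ v := by
  have hk := integrable_indicator_abs_sub_rpow_neg hs1 β.re
  calc ∫ v, ρ v / ‖(v : ℂ) - β‖ ^ s
      ≤ ∫ v, M * (Ioc (β.re - 1) (β.re + 1)).indicator (fun v => |v - β.re| ^ (-s)) v + ρ v :=
        integral_mono_ae (integrable_div_norm_sub_rpow hs0 hs1 hρ hρ0 hρM β)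
          ((hk.const_mul M).add hρ)
          (by filter_upwards [volume.ae_ne β.re] with v hv using
            div_norm_sub_rpow_le hs0 hρ0 hρM β hv)
    _ = M * (2 / (1 - s)) + ∫ v, ρ v := by
        rw [integral_add (hk.const_mul M) hρ, integral_const_mul,
          integral_indicator measurableSet_Ioc, ← intervalIntegral.integral_of_le (by linarith),
          integral_abs_sub_rpow_neg hs1]

theorem rpow_mul_integral_div_norm_sub_rpow_le (hs0 : 0 ≤ s) (hs1 : s ≤ 1) (hR : 0 ≤ R)
    (hρ : Integrable ρ) (hρ0 : ∀ v, 0 ≤ ρ v) (hρR : ∀ v, ρ v ≠ 0 → |v| ≤ R) (β : ℂ)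
    (hF : Integrable (fun v => ρ v / ‖(v : ℂ) - β‖ ^ s)) :
    (‖β‖ + R) ^ s * ∫ v, ρ v / ‖(v : ℂ) - β‖ ^ s
      ≤ (∫ v, ρ v) + (2 * R) ^ s * ∫ v, ρ v / ‖(v : ℂ) - β‖ ^ s := by
  rw [← integral_const_mul, ← integral_const_mul, ← integral_add hρ (hF.const_mul _)]
  refine integral_mono (hF.const_mul _) (hρ.add (hF.const_mul _)) fun v => ?_
  by_cases hv : ρ v = 0
  · simp [hv]
  set x := ‖(v : ℂ) - β‖
  have hq : 0 ≤ ρ v / x ^ s := div_nonneg (hρ0 v) (by positivity)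
  have hβ : ‖β‖ ≤ |v| + x := by
    simpa [x, Complex.norm_real, norm_sub_rev] using norm_le_norm_add_norm_sub' β (v : ℂ)
  have hpow : (‖β‖ + R) ^ s ≤ x ^ s + (2 * R) ^ s :=
    calc (‖β‖ + R) ^ s ≤ (x + 2 * R) ^ s :=
          Real.rpow_le_rpow (by positivity) (by linarith [hρR v hv]) hs0
      _ ≤ x ^ s + (2 * R) ^ s := Real.rpow_add_le_add_rpow (by positivity) (by positivity) hs0 hs1
  have hcancel : x ^ s * (ρ v / x ^ s) ≤ ρ v := by
    rcases eq_or_ne (x ^ s) 0 with h | h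
    · simp [h, hρ0 v]
    · rw [mul_div_cancel₀ _ h]
  calc (‖β‖ + R) ^ s * (ρ v / x ^ s) ≤ (x ^ s + (2 * R) ^ s) * (ρ v / x ^ s) := by gcongr
    _ ≤ ρ v + (2 * R) ^ s * (ρ v / x ^ s) := by rw [add_mul]; gcongr

theorem integrable_norm_sub_rpow_mul {f : ℝ → ℝ} (hs : 0 ≤ s) (hf : Integrable f)
    (hfR : ∀ v, f v ≠ 0 → |v| ≤ R) (η : ℂ) :
    Integrable (fun v : ℝ => ‖(v : ℂ) - η‖ ^ s * f v) := by
  refine (hf.norm.const_mul ((R + ‖η‖) ^ s)).mono' (by fun_prop) (ae_of_all _ fun v => ?_)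
  by_cases hv : f v = 0
  · simp [hv]
  rw [norm_mul, Real.norm_of_nonneg (by positivity)]
  gcongr
  linarith [norm_sub_le_abs_add_norm v η, hfR v hv]

theorem mul_sub_le_integral_norm_sub_rpow_mul (hs : 0 ≤ s) (hρ : Integrable ρ)
    (hρ0 : ∀ v, 0 ≤ ρ v) (hρM : ∀ v, ρ v ≤ M) {δ : ℝ} (hδ : 0 ≤ δ) (η : ℂ)
    (hG : Integrable (fun v : ℝ => ‖(v : ℂ) - η‖ ^ s * ρ v)) :
    δ ^ s * ((∫ v, ρ v) - 2 * δ * M) ≤ ∫ v : ℝ, ‖(v : ℂ) - η‖ ^ s * ρ v := by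
  set S := Ioo (η.re - δ) (η.re + δ)
  have hS : Integrable (S.indicator fun _ => M) :=
    (integrableOn_const measure_Ioo_lt_top.ne).integrable_indicator measurableSet_Ioo
  calc δ ^ s * ((∫ v, ρ v) - 2 * δ * M) = ∫ v, δ ^ s * (ρ v - S.indicator (fun _ => M) v) := by
        rw [integral_const_mul, integral_sub hρ hS, integral_indicator_const _ measurableSet_Ioo,
          Real.volume_real_Ioo_of_le (by linarith), smul_eq_mul]
        ring_nf
    _ ≤ ∫ v : ℝ, ‖(v : ℂ) - η‖ ^ s * ρ v := integral_mono ((hρ.sub hS).const_mul _) hG fun v => ?_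
  by_cases hv : v ∈ S
  · rw [indicator_of_mem hv]
    exact (mul_nonpos_of_nonneg_of_nonpos (by positivity) (by linarith [hρM v])).trans
      (mul_nonneg (by positivity) (hρ0 v))
  · have hδv : δ ≤ |v - η.re| := by
      rw [mem_Ioo, not_and_or, not_lt, not_lt] at hv
      rcases hv with h | h
      · rw [abs_of_nonpos (by linarith)]; linarith
      · rw [abs_of_nonneg (by linarith)]; linarith
    rw [indicator_of_notMem hv, sub_zero]
    gcongr
    · exact hρ0 v
    · exact hδv.trans (abs_sub_re_le_norm_sub v η)

theorem integral_norm_sub_rpow_mul_le (hs : 0 ≤ s) (hρ0 : ∀ v, 0 ≤ ρ v)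
    (hρR : ∀ v, ρ v ≠ 0 → |v| ≤ R) (η β : ℂ)
    (hH : Integrable (fun v : ℝ => ‖(v : ℂ) - η‖ ^ s / ‖(v : ℂ) - β‖ ^ s * ρ v)) :
    ∫ v : ℝ, ‖(v : ℂ) - η‖ ^ s * ρ v
      ≤ (‖β‖ + R) ^ s * ∫ v : ℝ, ‖(v : ℂ) - η‖ ^ s / ‖(v : ℂ) - β‖ ^ s * ρ v := by
  rw [← integral_const_mul]
  refine integral_mono_of_nonneg (ae_of_all _ fun v => mul_nonneg (by positivity) (hρ0 v))
    (hH.const_mul _) ?_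
  filter_upwards [volume.ae_ne β.re] with v hv
  by_cases hρv : ρ v = 0
  · simp [hρv]
  have hpos : 0 < ‖(v : ℂ) - β‖ :=
    (abs_pos.2 (sub_ne_zero.2 hv)).trans_le (abs_sub_re_le_norm_sub v β)
  have hle : ‖(v : ℂ) - β‖ ≤ ‖β‖ + R := by
    linarith [norm_sub_le_abs_add_norm v β, hρR v hρv]
  calc ‖(v : ℂ) - η‖ ^ s * ρ v
      = ‖(v : ℂ) - β‖ ^ s * (‖(v : ℂ) - η‖ ^ s / ‖(v : ℂ) - β‖ ^ s * ρ v) := by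
        field_simp
    _ ≤ (‖β‖ + R) ^ s * (‖(v : ℂ) - η‖ ^ s / ‖(v : ℂ) - β‖ ^ s * ρ v) := by
        gcongr
        exact mul_nonneg (by positivity) (hρ0 v)

theorem integrable_norm_sub_rpow_div_norm_sub_rpow_mul (hs0 : 0 ≤ s) (hs1 : s < 1)
    (hρ : Integrable ρ) (hρ0 : ∀ v, 0 ≤ ρ v) (hρM : ∀ v, ρ v ≤ M) (hρR : ∀ v, ρ v ≠ 0 → |v| ≤ R)
    (η β : ℂ) :
    Integrable (fun v : ℝ => ‖(v : ℂ) - η‖ ^ s / ‖(v : ℂ) - β‖ ^ s * ρ v) := by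
  refine (integrable_norm_sub_rpow_mul hs0 (integrable_div_norm_sub_rpow hs0 hs1 hρ hρ0 hρM β)
    (fun v hv => hρR v ?_) η).congr (ae_of_all _ fun v => by ring)
  exact left_ne_zero_of_mul (by rwa [div_eq_mul_inv] at hv)

theorem exists_forall_rpow_mul_integral_div_norm_sub_rpow_le (hs0 : 0 ≤ s) (hs1 : s < 1)
    (hR : 0 ≤ R) (hρ : Integrable ρ) (hρ0 : ∀ v, 0 ≤ ρ v) (hρM : ∀ v, ρ v ≤ M)
    (hρR : ∀ v, ρ v ≠ 0 → |v| ≤ R) :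
    ∃ K, ∀ β : ℂ, (‖β‖ + R) ^ s * ∫ v, ρ v / ‖(v : ℂ) - β‖ ^ s ≤ K := by
  refine ⟨(∫ v, ρ v) + (2 * R) ^ s * (M * (2 / (1 - s)) + ∫ v, ρ v), fun β => ?_⟩
  refine (rpow_mul_integral_div_norm_sub_rpow_le hs0 hs1.le hR hρ hρ0 hρR β
    (integrable_div_norm_sub_rpow hs0 hs1 hρ hρ0 hρM β)).trans ?_
  gcongr
  exact integral_div_norm_sub_rpow_le hs0 hs1 hρ hρ0 hρM β

theorem exists_pos_forall_le_integral_norm_sub_rpow_mul (hs : 0 ≤ s) (hρ : Integrable ρ)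
    (hρ0 : ∀ v, 0 ≤ ρ v) (hρM : ∀ v, ρ v ≤ M) (hρR : ∀ v, ρ v ≠ 0 → |v| ≤ R)
    (hρ1 : ∫ v, ρ v = 1) :
    ∃ c > 0, ∀ η : ℂ, c ≤ ∫ v : ℝ, ‖(v : ℂ) - η‖ ^ s * ρ v := by
  have hM : 0 < M := by
    by_contra! hM
    simp [fun v => le_antisymm ((hρM v).trans hM) (hρ0 v)] at hρ1
  have hhalf : 1 - 2 * (1 / (4 * M)) * M = 1 / 2 := by field_simp; ring
  refine ⟨(1 / (4 * M)) ^ s * (1 / 2), by positivity, fun η => ?_⟩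
  have := mul_sub_le_integral_norm_sub_rpow_mul hs hρ hρ0 hρM (δ := 1 / (4 * M))
    (by positivity) η (integrable_norm_sub_rpow_mul hs hρ hρR η)
  rwa [hρ1, hhalf] at this

end Density

/-- the decoupling lemma (Lemma 2 / (eq:decoupling)). -/
theorem stmt_3 (s : ℝ) (hs : s ∈ Set.Ioo (0 : ℝ) 1) (ρ : ℝ → ℝ) (hmeas : Measurable ρ)
    (hnonneg : ∀ v, 0 ≤ ρ v) (hbdd : ∃ M, ∀ v, ρ v ≤ M) (hcomp : HasCompactSupport ρ)
    (hprob : ∫ v, ρ v = 1) :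
    ∃ C : ℝ, ∀ η β : ℂ,
      ∫ v : ℝ, ρ v / ‖(v : ℂ) - β‖ ^ s
        ≤ C * ∫ v : ℝ, ‖(v : ℂ) - η‖ ^ s / ‖(v : ℂ) - β‖ ^ s * ρ v := by
  obtain ⟨hs0, hs1⟩ := hs
  obtain ⟨M, hρM⟩ := hbdd
  obtain ⟨R, hR, hρR⟩ := hcomp.exists_abs_le_of_ne_zero
  have hρ : Integrable ρ := hcomp.integrable_of_norm_le hmeas.aestronglyMeasurable fun v => by
    rw [Real.norm_of_nonneg (hnonneg v)]; exact hρM v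
  obtain ⟨K, hK⟩ :=
    exists_forall_rpow_mul_integral_div_norm_sub_rpow_le hs0.le hs1 hR hρ hnonneg hρM hρR
  obtain ⟨c, hc, hc_le⟩ :=
    exists_pos_forall_le_integral_norm_sub_rpow_mul hs0.le hρ hnonneg hρM hρR hprob
  refine ⟨K / c, fun η β => ?_⟩
  have hRHS := (hc_le η).trans (integral_norm_sub_rpow_mul_le hs0.le hnonneg hρR η β
    (integrable_norm_sub_rpow_div_norm_sub_rpow_mul hs0.le hs1 hρ hnonneg hρM hρR η β))
  have hLHS0 : 0 ≤ ∫ v : ℝ, ρ v / ‖(v : ℂ) - β‖ ^ s :=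
    integral_nonneg fun v => div_nonneg (hnonneg v) (by positivity)
  have hRHS0 : 0 ≤ ∫ v : ℝ, ‖(v : ℂ) - η‖ ^ s / ‖(v : ℂ) - β‖ ^ s * ρ v :=
    integral_nonneg fun v => mul_nonneg (by positivity) (hnonneg v)
  rw [div_mul_eq_mul_div, le_div_iff₀ hc]
  nlinarith [mul_le_mul_of_nonneg_left hRHS hLHS0, mul_le_mul_of_nonneg_right (hK β) hRHS0]
end

section
/- (Hölder interpolation for eigenfunction correlators) Let $(a_k)_{k\in K}$ and $(b_k)_{k\in K}$ be finite families of nonnegative random variables, let $s \in (0,1)$, and set $Q(r) := \sum_k a_k^{2-r} b_k^r$. If $Q(2) \le 1$ pointwise, then $\mathbb{E}[Q(1)] \le (\mathbb{E}[Q(s)])^{1/(2-s)}$. -/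
open MeasureTheory

/-- Hölder interpolation for eigenfunction correlators:
if `Q(2) = ∑ b_k² ≤ 1` pointwise then `𝔼[Q(1)] ≤ (𝔼[Q(s)])^{1/(2-s)}`. -/
theorem stmt_17 {Ω : Type*} [MeasurableSpace Ω] (μ : Measure Ω) [IsProbabilityMeasure μ]
    {K : Type*} [Fintype K] (s : ℝ) (hs : s ∈ Set.Ioo (0 : ℝ) 1)
    (a b : Ω → K → ℝ)
    (ha : ∀ k, Measurable fun ω => a ω k) (hb : ∀ k, Measurable fun ω => b ω k)
    (hann : ∀ ω k, 0 ≤ a ω k) (hbnn : ∀ ω k, 0 ≤ b ω k)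
    (h2 : ∀ ω, ∑ k, (b ω k) ^ 2 ≤ 1)
    (hint1 : Integrable (fun ω => ∑ k, a ω k * b ω k) μ)
    (hints : Integrable (fun ω => ∑ k, a ω k ^ (2 - s) * b ω k ^ s) μ) :
    ∫ ω, ∑ k, a ω k * b ω k ∂μ
      ≤ (∫ ω, ∑ k, a ω k ^ (2 - s) * b ω k ^ s ∂μ) ^ (1 / (2 - s)) := by
  obtain ⟨hs0, hs1⟩ := hs
  set p : ℝ := 2 - s with hp
  set q : ℝ := (2 - s) / (1 - s) with hq
  have hp1 : 1 < p := by simp only [hp]; linarith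
  have hp0 : 0 < p := by linarith
  have hq0 : 0 < q := by apply div_pos <;> linarith
  have hexp : 0 < 1 / p := by positivity
  have hexp1 : 1 / p ≤ 1 := by
    rw [div_le_one hp0]; linarith
  have hpq : Real.HolderConjugate p q := by
    rw [Real.holderConjugate_iff]
    constructor
    · exact hp1
    · rw [hp, hq]
      rw [inv_div]
      field_simp [show (2:ℝ) - s ≠ 0 by linarith, show (1:ℝ) - s ≠ 0 by linarith]
      ring
  set Q : Ω → ℝ := fun ω => ∑ k, a ω k ^ (2 - s) * b ω k ^ s with hQ
  have hQnn : ∀ ω, 0 ≤ Q ω := fun ω =>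
    Finset.sum_nonneg fun k _ => mul_nonneg (Real.rpow_nonneg (hann ω k) _)
      (Real.rpow_nonneg (hbnn ω k) _)
  -- Pointwise Hölder step
  have hpt : ∀ ω, ∑ k, a ω k * b ω k ≤ Q ω ^ (1 / p) := by
    intro ω
    have key := Real.inner_le_Lp_mul_Lq_of_nonneg (Finset.univ)
      (f := fun k => (a ω k ^ (2 - s) * b ω k ^ s) ^ (1 / p))
      (g := fun k => (b ω k ^ (2 : ℝ)) ^ (1 / q)) hpq
      (fun k _ => Real.rpow_nonneg (mul_nonneg (Real.rpow_nonneg (hann ω k) _)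
        (Real.rpow_nonneg (hbnn ω k) _)) _)
      (fun k _ => Real.rpow_nonneg (Real.rpow_nonneg (hbnn ω k) _) _)
    have e1 : ∀ k, (a ω k ^ (2 - s) * b ω k ^ s) ^ (1 / p)
        * (b ω k ^ (2 : ℝ)) ^ (1 / q) = a ω k * b ω k := by
      intro k
      rw [Real.mul_rpow (Real.rpow_nonneg (hann ω k) _) (Real.rpow_nonneg (hbnn ω k) _),
        ← Real.rpow_mul (hann ω k), ← Real.rpow_mul (hbnn ω k),
        ← Real.rpow_mul (hbnn ω k), mul_assoc,
        ← Real.rpow_add' (hbnn ω k) (by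
          rw [hp, hq]; field_simp; intro h; rw [div_eq_zero_iff] at h; rcases h with h | h <;> linarith)]
      have h1 : (2 - s) * (1 / p) = 1 := by rw [hp]; field_simp [show (2:ℝ) - s ≠ 0 by linarith, show (1:ℝ) - s ≠ 0 by linarith]
      have h2' : s * (1 / p) + 2 * (1 / q) = 1 := by
        rw [hp, hq]; field_simp [show (2:ℝ) - s ≠ 0 by linarith, show (1:ℝ) - s ≠ 0 by linarith]; ring
      rw [h1, h2', Real.rpow_one, Real.rpow_one]
    have e2 : ∀ k, ((a ω k ^ (2 - s) * b ω k ^ s) ^ (1 / p)) ^ p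
        = a ω k ^ (2 - s) * b ω k ^ s := by
      intro k
      rw [← Real.rpow_mul (mul_nonneg (Real.rpow_nonneg (hann ω k) _)
        (Real.rpow_nonneg (hbnn ω k) _)), one_div, inv_mul_cancel₀ hp0.ne',
        Real.rpow_one]
    have e3 : ∀ k, ((b ω k ^ (2 : ℝ)) ^ (1 / q)) ^ q = b ω k ^ 2 := by
      intro k
      rw [← Real.rpow_mul (Real.rpow_nonneg (hbnn ω k) _), one_div,
        inv_mul_cancel₀ hq0.ne', Real.rpow_one]
      rw [show (2 : ℝ) = ((2 : ℕ) : ℝ) by norm_num, Real.rpow_natCast]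
    simp only [e1, e2, e3] at key
    calc ∑ k, a ω k * b ω k ≤ Q ω ^ (1 / p) * (∑ k, b ω k ^ 2) ^ (1 / q) := key
      _ ≤ Q ω ^ (1 / p) * 1 := by
          apply mul_le_mul_of_nonneg_left _ (Real.rpow_nonneg (hQnn ω) _)
          exact Real.rpow_le_one (Finset.sum_nonneg fun k _ => sq_nonneg _) (h2 ω)
            (by positivity)
      _ = Q ω ^ (1 / p) := mul_one _
  -- Integrability of Q^(1/p)
  have hQmeas : Measurable Q := by
    apply Finset.measurable_sum
    intro k _
    exact (((Real.continuous_rpow_const (by linarith)).measurable.comp (ha k)).mul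
      ((Real.continuous_rpow_const hs0.le).measurable.comp (hb k)))
  have hbound : ∀ ω, ‖Q ω ^ (1 / p)‖ ≤ 1 + Q ω := by
    intro ω
    rw [Real.norm_of_nonneg (Real.rpow_nonneg (hQnn ω) _)]
    rcases le_or_gt (Q ω) 1 with h | h
    · calc Q ω ^ (1 / p) ≤ 1 := Real.rpow_le_one (hQnn ω) h hexp.le
        _ ≤ 1 + Q ω := by linarith [hQnn ω]
    · calc Q ω ^ (1 / p) ≤ Q ω ^ (1 : ℝ) :=
          Real.rpow_le_rpow_of_exponent_le h.le hexp1
        _ = Q ω := Real.rpow_one _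
        _ ≤ 1 + Q ω := by linarith
  have hFint : Integrable (fun ω => Q ω ^ (1 / p)) μ := by
    apply Integrable.mono' ((integrable_const (1 : ℝ)).add hints)
      (((Real.continuous_rpow_const hexp.le).measurable.comp hQmeas).aestronglyMeasurable)
    filter_upwards with ω using hbound ω
  -- Jensen step
  have hconc : ConcaveOn ℝ (Set.Ici 0) (fun x : ℝ => x ^ (1 / p)) :=
    Real.concaveOn_rpow hexp.le hexp1
  have hcont : ContinuousOn (fun x : ℝ => x ^ (1 / p)) (Set.Ici 0) := fun x _ =>
    (Real.continuousAt_rpow_const x _ (Or.inr hexp.le)).continuousWithinAt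
  have hjensen : ∫ ω, Q ω ^ (1 / p) ∂μ ≤ (∫ ω, Q ω ∂μ) ^ (1 / p) :=
    hconc.le_map_integral hcont isClosed_Ici
      (Filter.Eventually.of_forall fun ω => hQnn ω) hints hFint
  calc ∫ ω, ∑ k, a ω k * b ω k ∂μ ≤ ∫ ω, Q ω ^ (1 / p) ∂μ :=
        integral_mono hint1 hFint hpt
    _ ≤ (∫ ω, Q ω ∂μ) ^ (1 / p) := hjensen
end

section
/- (Graf's bound ingredient) There exists a constant $C < \infty$ depending only on $s \in (0,1)$ and on the bounded compactly supported probability density $\rho$ such that $|\mathrm{Im}\,w| \cdot |w|^s \int_{\mathbb{R}} \frac{\rho(x+\alpha)}{|\alpha + w|^2}\,d\alpha \le C$ for all $w \in \mathbb{C}$ and all $x \in \mathrm{supp}\,\rho$. -/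
/-!
For `|w|` of the order of the size of the support, `|Im w| / |α + w|²` is `π` times a Cauchy
density in `α`, so `|Im w| ∫ ρ(x+α) / |α+w|² dα ≤ π sup ρ` while `|w|^s` stays bounded.
For large `|w|`, the pole `-w` is at distance at least `|w|/2` from the support of `ρ(x + ·)`,
so the integral is `O(|w|⁻²)`, which absorbs `|Im w| |w|^s ≤ |w|^(1+s)` because `s ≤ 1`.
-/

open MeasureTheory ProbabilityTheory Real Set

lemma integral_le_integral_of_le_of_nonneg {α : Type*} [MeasurableSpace α] {μ : Measure α}
    {f g : α → ℝ} (hg : Integrable g μ) (hg0 : 0 ≤ g) (hfg : f ≤ g) :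
    ∫ a, f a ∂μ ≤ ∫ a, g a ∂μ := by
  by_cases hf : Integrable f μ
  · exact integral_mono hf hg hfg
  · rw [integral_undef hf]
    exact integral_nonneg hg0

lemma sq_norm_ofReal_add (α : ℝ) (w : ℂ) :
    ‖(α : ℂ) + w‖ ^ 2 = (α + w.re) ^ 2 + w.im ^ 2 := by
  rw [Complex.sq_norm, Complex.normSq_apply]
  simp only [Complex.add_re, Complex.ofReal_re, Complex.add_im, Complex.ofReal_im, zero_add]
  ring

lemma abs_im_div_sq_norm_ofReal_add (w : ℂ) (α : ℝ) :
    |w.im| / ‖(α : ℂ) + w‖ ^ 2 = π * cauchyPDFReal (-w.re) ‖w.im‖₊ α := by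
  rw [cauchyPDFReal_def, sq_norm_ofReal_add, coe_nnnorm, norm_eq_abs, sq_abs, sub_neg_eq_add,
    ← mul_assoc, ← mul_assoc, mul_inv_cancel₀ pi_ne_zero, one_mul, div_eq_mul_inv]

section

variable {f : ℝ → ℝ} {M : ℝ}

lemma abs_im_mul_integral_div_sq_norm_le (hM0 : 0 ≤ M) (hf : ∀ α, f α ≤ M) (w : ℂ) :
    |w.im| * ∫ α, f α / ‖(α : ℂ) + w‖ ^ 2 ≤ π * M := by
  rcases eq_or_ne w.im 0 with him | him
  · rw [him, abs_zero, zero_mul]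
    positivity
  have hγ : ‖w.im‖₊ ≠ 0 := nnnorm_ne_zero_iff.mpr him
  set p := cauchyPDFReal (-w.re) ‖w.im‖₊
  have hp0 : 0 ≤ p := fun α => (cauchyPDF_pos _ hγ α).le
  have hp : ∫ α, p α = 1 := integral_cauchyPDFReal_eq_one _ hγ
  have hpt : (fun α => |w.im| * (f α / ‖(α : ℂ) + w‖ ^ 2)) ≤ fun α => π * M * p α := by
    intro α
    dsimp only
    rw [mul_div_left_comm, abs_im_div_sq_norm_ofReal_add, mul_left_comm, mul_assoc]
    gcongr
    · exact hp0 α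
    · exact hf α
  calc |w.im| * ∫ α, f α / ‖(α : ℂ) + w‖ ^ 2
      = ∫ α, |w.im| * (f α / ‖(α : ℂ) + w‖ ^ 2) := (integral_const_mul _ _).symm
    _ ≤ ∫ α, π * M * p α :=
        integral_le_integral_of_le_of_nonneg ((integrable_cauchyPDFReal _).const_mul _)
          (fun α => mul_nonneg (by positivity) (hp0 α)) hpt
    _ = π * M := by rw [integral_const_mul, hp, mul_one]

lemma integral_div_sq_norm_le_of_support_subset {L : ℝ} (hM0 : 0 ≤ M) (hf : ∀ α, f α ≤ M)
    (hL : 0 ≤ L) (hsupp : Function.support f ⊆ Icc (-L) L) {w : ℂ} (hw0 : w ≠ 0)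
    (hw : 2 * L ≤ ‖w‖) :
    ∫ α, f α / ‖(α : ℂ) + w‖ ^ 2 ≤ 8 * M * L / ‖w‖ ^ 2 := by
  have hpt : (fun α : ℝ => f α / ‖(α : ℂ) + w‖ ^ 2)
      ≤ (Icc (-L) L).indicator fun _ => 4 * M / ‖w‖ ^ 2 := by
    intro α
    dsimp only
    by_cases hα : α ∈ Icc (-L) L
    · have hnear : ‖w‖ / 2 ≤ ‖(α : ℂ) + w‖ := by
        have h := norm_sub_norm_le w (-(α : ℂ))
        rw [sub_neg_eq_add, norm_neg, Complex.norm_real, norm_eq_abs, add_comm] at h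
        have := abs_le.mpr hα
        linarith
      calc f α / ‖(α : ℂ) + w‖ ^ 2 ≤ M / ‖(α : ℂ) + w‖ ^ 2 := by gcongr; exact hf α
        _ ≤ M / (‖w‖ / 2) ^ 2 := by gcongr
        _ = _ := by rw [indicator_of_mem hα]; ring
    · rw [Function.notMem_support.mp (fun h => hα (hsupp h)), zero_div, indicator_of_notMem hα]
  calc ∫ α, f α / ‖(α : ℂ) + w‖ ^ 2
      ≤ ∫ α, (Icc (-L) L).indicator (fun _ => 4 * M / ‖w‖ ^ 2) α :=
        integral_le_integral_of_le_of_nonneg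
          ((integrable_indicator_iff measurableSet_Icc).mpr
            (integrableOn_const measure_Icc_lt_top.ne))
          (indicator_nonneg fun _ _ => by positivity) hpt
    _ = 8 * M * L / ‖w‖ ^ 2 := by
        rw [integral_indicator_const _ measurableSet_Icc, volume_real_Icc_of_le (by linarith),
          smul_eq_mul]
        ring

lemma abs_im_mul_norm_rpow_mul_integral_le {s L : ℝ} (hs0 : 0 ≤ s) (hs1 : s ≤ 1) (hM0 : 0 ≤ M)
    (hf : ∀ α, f α ≤ M) (hL : 0 ≤ L) (hsupp : Function.support f ⊆ Icc (-L) L) (w : ℂ) :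
    |w.im| * ‖w‖ ^ s * ∫ α, f α / ‖(α : ℂ) + w‖ ^ 2
      ≤ π * M * max (2 * L) 1 ^ s + 8 * M * L := by
  set I := ∫ α, f α / ‖(α : ℂ) + w‖ ^ 2
  by_cases hsmall : ‖w‖ ≤ max (2 * L) 1
  · have hpow : ‖w‖ ^ s ≤ max (2 * L) 1 ^ s := by gcongr
    calc |w.im| * ‖w‖ ^ s * I = ‖w‖ ^ s * (|w.im| * I) := by ring
      _ ≤ ‖w‖ ^ s * (π * M) :=
          mul_le_mul_of_nonneg_left (abs_im_mul_integral_div_sq_norm_le hM0 hf w) (by positivity)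
      _ ≤ max (2 * L) 1 ^ s * (π * M) := by gcongr
      _ ≤ π * M * max (2 * L) 1 ^ s + 8 * M * L := by nlinarith [mul_nonneg hM0 hL]
  · push Not at hsmall
    have hw1 : 1 ≤ ‖w‖ := (le_max_right _ _).trans hsmall.le
    have hw0 : w ≠ 0 := norm_pos_iff.mp (one_pos.trans_le hw1)
    have hpow : |w.im| * ‖w‖ ^ s ≤ ‖w‖ ^ 2 := by
      calc |w.im| * ‖w‖ ^ s ≤ ‖w‖ * ‖w‖ ^ (1 : ℝ) := by
            gcongr
            exact Complex.abs_im_le_norm w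
        _ = ‖w‖ ^ 2 := by rw [rpow_one, sq]
    calc |w.im| * ‖w‖ ^ s * I ≤ |w.im| * ‖w‖ ^ s * (8 * M * L / ‖w‖ ^ 2) := by
          gcongr
          exact integral_div_sq_norm_le_of_support_subset hM0 hf hL hsupp hw0
            ((le_max_left _ _).trans hsmall.le)
      _ ≤ ‖w‖ ^ 2 * (8 * M * L / ‖w‖ ^ 2) := by gcongr
      _ = 8 * M * L := by field_simp
      _ ≤ π * M * max (2 * L) 1 ^ s + 8 * M * L := by
          have : 0 ≤ π * M * max (2 * L) 1 ^ s := by positivity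
          linarith

end

theorem stmt_18_general (s : ℝ) (hs : s ∈ Set.Ioo (0 : ℝ) 1) (ρ : ℝ → ℝ)
    (hbd : ∃ M, ∀ x, ρ x ≤ M) (hcs : HasCompactSupport ρ) :
    ∃ C : ℝ, ∀ (w : ℂ) (x : ℝ), x ∈ tsupport ρ →
      |w.im| * ‖w‖ ^ s *
        ∫ α : ℝ, ρ (x + α) / ‖(α : ℂ) + w‖ ^ 2 ≤ C := by
  obtain ⟨M, hM⟩ := hbd
  obtain ⟨R, hR⟩ := hcs.isCompact.isBounded.subset_closedBall 0
  rw [Real.closedBall_eq_Icc, zero_sub, zero_add] at hR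
  refine ⟨π * max M 0 * max (2 * (2 * R)) 1 ^ s + 8 * max M 0 * (2 * R), fun w x hx => ?_⟩
  have hxR := hR hx
  have hsupp : Function.support (fun α => ρ (x + α)) ⊆ Icc (-(2 * R)) (2 * R) := by
    intro α hα
    have := hR (subset_tsupport ρ hα)
    constructor <;> linarith [this.1, this.2, hxR.1, hxR.2]
  exact abs_im_mul_norm_rpow_mul_integral_le hs.1.le hs.2.le (le_max_right M 0)
    (fun α => (hM _).trans (le_max_left M 0)) (by linarith [hxR.1, hxR.2]) hsupp w

/-- Graf's bound ingredient (Lemma 5.3):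
`|Im w| |w|^s ∫ ρ(x+α)/|α+w|² dα ≤ C` uniformly in `w ∈ ℂ` and `x ∈ supp ρ`. -/
theorem stmt_18 (s : ℝ) (hs : s ∈ Set.Ioo (0 : ℝ) 1) (ρ : ℝ → ℝ) (hmeas : Measurable ρ)
    (hnn : ∀ x, 0 ≤ ρ x) (hbd : ∃ M, ∀ x, ρ x ≤ M) (hcs : HasCompactSupport ρ)
    (hprob : ∫ x, ρ x = 1) :
    ∃ C : ℝ, ∀ (w : ℂ) (x : ℝ), x ∈ tsupport ρ →
      |w.im| * ‖w‖ ^ s *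
        ∫ α : ℝ, ρ (x + α) / ‖(α : ℂ) + w‖ ^ 2 ≤ C :=
  stmt_18_general s hs ρ hbd hcs
end
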